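/- arXiv:2508.02891 — 3 statements merged into one kernel-verified Lean document; each statement's English description precedes it below -/
import Mathlib

section
/- For all vectors z_1,…,z_8, w ∈ ℂ^4 the following polynomial identity holds: 2A·⟨127w⟩ − B·⟨128w⟩ = ⟨1278⟩·⟨12w*43*568⟩ + det[(128*34), z_6, z_5, (78*12w)], where ⟨127w⟩ := det[z_1 z_2 z_7 w], ⟨128w⟩ := det[z_1 z_2 z_8 w], ⟨12w*43*568⟩ is the chain polynomial with blocks (z_1,z_2,w), (z_4,z_3), (z_5,z_6,z_8), and (128*34) and (78*12w) are the shuffle vectors associated with the tuples ((z_1,z_2,z_8),(z_3,z_4)) and ((z_7,z_8),(z_1,z_2,w)) respectively. -/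
noncomputable section

/-- `⟨u₁ u₂ u₃ u₄⟩ = det[u₁ u₂ u₃ u₄]`: the determinant of the `4 × 4` complex matrix with
columns `u₁, u₂, u₃, u₄` in the listed order. -/
def det4 (a b c d : Fin 4 → ℂ) : ℂ :=
  Matrix.det (Matrix.of fun i j => ![a, b, c, d] j i)

/-- The chain polynomial `⟨X * Y * U⟩` for blocks `X = (x₁,x₂,x₃)`, `Y = (y₁,y₂)`,
`U = (u₁,u₂,u₃)` of sizes `(3,2,3)`:
`Σ_{w ∈ S₂¹} sign(w)·det[x₁ x₂ x₃ y_{w(2)}]·det[y_{w(1)} u₁ u₂ u₃]`. -/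
def chain323 (x1 x2 x3 y1 y2 u1 u2 u3 : Fin 4 → ℂ) : ℂ :=
  det4 x1 x2 x3 y2 * det4 y1 u1 u2 u3 - det4 x1 x2 x3 y1 * det4 y2 u1 u2 u3

/-- The shuffle vector `(X * Y) ∈ ℂ⁴` for tuples `X = (x₁,x₂,x₃)`, `Y = (y₁,y₂)`
(`p + q = 5`): `Σ_j (−1)^{j−1}·det[x₁ x₂ x₃ y₁ ⋯ ŷ_j ⋯ y₂]·y_j`. -/
def shuf32 (x1 x2 x3 y1 y2 : Fin 4 → ℂ) : Fin 4 → ℂ :=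
  det4 x1 x2 x3 y2 • y1 - det4 x1 x2 x3 y1 • y2

/-- The shuffle vector `(X * Y) ∈ ℂ⁴` for tuples `X = (x₁,x₂)`, `Y = (y₁,y₂,y₃)`
(`p + q = 5`): `Σ_j (−1)^{j−1}·det[x₁ x₂ y₁ ⋯ ŷ_j ⋯ y₃]·y_j`. -/
def shuf23 (x1 x2 y1 y2 y3 : Fin 4 → ℂ) : Fin 4 → ℂ :=
  det4 x1 x2 y2 y3 • y1 - det4 x1 x2 y1 y3 • y2 + det4 x1 x2 y1 y2 • y3

/-- `A := Y₈₈` where `Y_{ij} := ⟨12i * 43 * 56j⟩`. -/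
def Aco (z1 z2 z3 z4 z5 z6 z7 z8 : Fin 4 → ℂ) : ℂ :=
  chain323 z1 z2 z8 z4 z3 z5 z6 z8

/-- `B := Y₇₈ + Y₈₇` where `Y_{ij} := ⟨12i * 43 * 56j⟩`. -/
def Bco (z1 z2 z3 z4 z5 z6 z7 z8 : Fin 4 → ℂ) : ℂ :=
  chain323 z1 z2 z7 z4 z3 z5 z6 z8 + chain323 z1 z2 z8 z4 z3 z5 z6 z7

/-- `C := Y₇₇` where `Y_{ij} := ⟨12i * 43 * 56j⟩`. -/
def Cco (z1 z2 z3 z4 z5 z6 z7 z8 : Fin 4 → ℂ) : ℂ :=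
  chain323 z1 z2 z7 z4 z3 z5 z6 z7

/-!
Writing `Y_{ij} = ⟨12i * 43 * 56j⟩`, the left side is `2⟨127w⟩Y₈₈ − ⟨128w⟩(Y₇₈ + Y₈₇)`.
The first term on the right is `⟨127w⟩Y₈₈ − ⟨128w⟩Y₇₈`, by the three-term Plücker relation
`⟨1278⟩⟨12wa⟩ = ⟨127w⟩⟨128a⟩ − ⟨127a⟩⟨128w⟩` applied to the first factor of the chain.
For the second, `(78 * 12w)` is the meet of the line `78` with the plane `12w`, i.e.
`⟨127w⟩z₈ − ⟨128w⟩z₇` (the five-term Cramer relation), and a determinant with a shuffle vector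
`(X * Y)` in the first column is a chain polynomial; so the second term is
`⟨127w⟩Y₈₈ − ⟨128w⟩Y₈₇`.
-/

lemma det4_eq (a b c d : Fin 4 → ℂ) : det4 a b c d =
    a 0*(b 1*(c 2*d 3 - c 3*d 2) - b 2*(c 1*d 3 - c 3*d 1) + b 3*(c 1*d 2 - c 2*d 1))
  - a 1*(b 0*(c 2*d 3 - c 3*d 2) - b 2*(c 0*d 3 - c 3*d 0) + b 3*(c 0*d 2 - c 2*d 0))
  + a 2*(b 0*(c 1*d 3 - c 3*d 1) - b 1*(c 0*d 3 - c 3*d 0) + b 3*(c 0*d 1 - c 1*d 0))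
  - a 3*(b 0*(c 1*d 2 - c 2*d 1) - b 1*(c 0*d 2 - c 2*d 0) + b 2*(c 0*d 1 - c 1*d 0)) := by
  simp [det4, Matrix.det_succ_column_zero, Fin.sum_univ_succ, Fin.succAbove]
  ring

lemma det4_swap_mid (a b c d : Fin 4 → ℂ) : det4 a c b d = -det4 a b c d := by
  simp only [det4_eq]; ring

lemma det4_smul_sub_smul_left (s t : ℂ) (u v b c d : Fin 4 → ℂ) :
    det4 (s • u - t • v) b c d = s * det4 u b c d - t * det4 v b c d := by
  simp only [det4_eq, Pi.sub_apply, Pi.smul_apply, smul_eq_mul]; ring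

lemma det4_smul_sub_smul_right (s t : ℂ) (a b c u v : Fin 4 → ℂ) :
    det4 a b c (s • u - t • v) = s * det4 a b c u - t * det4 a b c v := by
  simp only [det4_eq, Pi.sub_apply, Pi.smul_apply, smul_eq_mul]; ring

lemma det4_plucker3 (a b c d e f : Fin 4 → ℂ) :
    det4 a b c d * det4 a b e f = det4 a b c e * det4 a b d f - det4 a b c f * det4 a b d e := by
  simp only [det4_eq]; ring

lemma det4_shuf32_left (x1 x2 x3 y1 y2 u1 u2 u3 : Fin 4 → ℂ) :
    det4 (shuf32 x1 x2 x3 y1 y2) u1 u2 u3 = chain323 x1 x2 x3 y1 y2 u1 u2 u3 :=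
  det4_smul_sub_smul_left _ _ _ _ _ _ _

lemma chain323_swap (x1 x2 x3 y1 y2 u1 u2 u3 : Fin 4 → ℂ) :
    chain323 x1 x2 x3 y2 y1 u1 u2 u3 = -chain323 x1 x2 x3 y1 y2 u1 u2 u3 := by
  simp only [chain323]; ring

lemma chain323_smul_sub_smul_right (s t : ℂ) (x1 x2 x3 y1 y2 u1 u2 u v : Fin 4 → ℂ) :
    chain323 x1 x2 x3 y1 y2 u1 u2 (s • u - t • v)
      = s * chain323 x1 x2 x3 y1 y2 u1 u2 u - t * chain323 x1 x2 x3 y1 y2 u1 u2 v := by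
  simp only [chain323, det4_smul_sub_smul_right]; ring

lemma chain323_plucker3 (a b c d e y1 y2 u1 u2 u3 : Fin 4 → ℂ) :
    det4 a b c d * chain323 a b e y1 y2 u1 u2 u3
      = det4 a b c e * chain323 a b d y1 y2 u1 u2 u3
        - det4 a b d e * chain323 a b c y1 y2 u1 u2 u3 := by
  simp only [chain323]
  linear_combination det4 y1 u1 u2 u3 * det4_plucker3 a b c d e y2
    - det4 y2 u1 u2 u3 * det4_plucker3 a b c d e y1

lemma shuf23_eq_smul_sub_smul (x1 x2 y1 y2 y3 : Fin 4 → ℂ) :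
    shuf23 x1 x2 y1 y2 y3 = det4 y1 y2 x1 y3 • x2 - det4 y1 y2 x2 y3 • x1 := by
  ext i
  fin_cases i <;>
    simp [shuf23, det4_eq] <;> ring

/-- For all vectors `z₁, …, z₈, w ∈ ℂ⁴`:
`2A·⟨127w⟩ − B·⟨128w⟩ = ⟨1278⟩·⟨12w * 43 * 568⟩ + det[(128*34), z₆, z₅, (78*12w)]`. -/
theorem identity_2A127w_minus_B128w (z1 z2 z3 z4 z5 z6 z7 z8 w : Fin 4 → ℂ) :
    2 * Aco z1 z2 z3 z4 z5 z6 z7 z8 * det4 z1 z2 z7 w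
      - Bco z1 z2 z3 z4 z5 z6 z7 z8 * det4 z1 z2 z8 w
    = det4 z1 z2 z7 z8 * chain323 z1 z2 w z4 z3 z5 z6 z8
      + det4 (shuf32 z1 z2 z8 z3 z4) z6 z5 (shuf23 z7 z8 z1 z2 w) := by
  have hchain := chain323_plucker3 z1 z2 z7 z8 w z4 z3 z5 z6 z8
  have hmeet : det4 (shuf32 z1 z2 z8 z3 z4) z6 z5 (shuf23 z7 z8 z1 z2 w)
      = det4 z1 z2 z7 w * Aco z1 z2 z3 z4 z5 z6 z7 z8
        - det4 z1 z2 z8 w * chain323 z1 z2 z8 z4 z3 z5 z6 z7 := by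
    rw [shuf23_eq_smul_sub_smul, det4_swap_mid _ z5 z6, det4_shuf32_left,
      chain323_smul_sub_smul_right]
    simp only [chain323_swap z1 z2 z8 z4 z3, Aco]; ring
  rw [hchain, hmeet]
  simp only [Aco, Bco]; ring

end
end

section
/- For all vectors z_1,…,z_9, w ∈ ℂ^4 the following two polynomial identities hold, where Y_x := ⟨789*21*56x⟩ denotes the chain polynomial with blocks (z_7,z_8,z_9), (z_2,z_1), (z_5,z_6,x) for a vector x: (i) ⟨127w⟩·Y_8 − ⟨128w⟩·Y_7 = ⟨1278⟩·⟨12w*65*789⟩, where ⟨12w*65*789⟩ is the chain polynomial with blocks (z_1,z_2,w), (z_6,z_5), (z_7,z_8,z_9); and (ii) ⟨567w⟩·Y_8 − ⟨568w⟩·Y_7 = ⟨5678⟩·Y_w. Here ⟨127w⟩ := det[z_1 z_2 z_7 w], ⟨128w⟩ := det[z_1 z_2 z_8 w], ⟨567w⟩ := det[z_5 z_6 z_7 w], ⟨568w⟩ := det[z_5 z_6 z_8 w]. -/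
noncomputable section

/-- `Y_x := ⟨789 * 21 * 56x⟩`: the chain polynomial with blocks `(z₇,z₈,z₉)`, `(z₂,z₁)`,
`(z₅,z₆,x)`. -/
def Ych (z1 z2 z5 z6 z7 z8 z9 x : Fin 4 → ℂ) : ℂ :=
  chain323 z7 z8 z9 z2 z1 z5 z6 x

/-! Both identities come from Cramer's rule in `ℂ⁴`: any five vectors satisfy
`⟨bcde⟩ a - ⟨acde⟩ b + ⟨abde⟩ c - ⟨abce⟩ d + ⟨abcd⟩ e = 0`. Applying the linear functionals
`x ↦ ⟨pqrx⟩`, and hence `x ↦ Y_x`, turns it into five-term Grassmann–Plücker relations.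
For (ii) take `(a, b, c, d, e) = (5, 6, 7, 8, w)`: `Y` vanishes at `z₅` and `z₆`.
For (i) take `(1, 2, 7, 8, w)` under both `Y` and `⟨789·⟩`; the values `Y₁`, `Y₂` are multiples
of `⟨1256⟩`, and the relation for `(1, 2, 5, 6, w)` under `⟨789·⟩` shows that `Y_w` and
`⟨12w * 65 * 789⟩` differ by `-⟨1256⟩⟨789w⟩`, which makes the two sides agree. -/

lemma det4_expand (a b c d : Fin 4 → ℂ) :
    det4 a b c d = a 0*b 1*c 2*d 3 - a 0*b 1*d 2*c 3 - a 0*c 1*b 2*d 3 + a 0*c 1*d 2*b 3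
      + a 0*d 1*b 2*c 3 - a 0*d 1*c 2*b 3 - b 0*a 1*c 2*d 3 + b 0*a 1*d 2*c 3
      + b 0*c 1*a 2*d 3 - b 0*c 1*d 2*a 3 - b 0*d 1*a 2*c 3 + b 0*d 1*c 2*a 3
      + c 0*a 1*b 2*d 3 - c 0*a 1*d 2*b 3 - c 0*b 1*a 2*d 3 + c 0*b 1*d 2*a 3
      + c 0*d 1*a 2*b 3 - c 0*d 1*b 2*a 3 - d 0*a 1*b 2*c 3 + d 0*a 1*c 2*b 3
      + d 0*b 1*a 2*c 3 - d 0*b 1*c 2*a 3 - d 0*c 1*a 2*b 3 + d 0*c 1*b 2*a 3 := by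
  rw [det4, Matrix.det_succ_row_zero]
  simp [Fin.sum_univ_succ, Matrix.det_fin_three, Matrix.submatrix, Fin.succAbove]
  ring

section Alternating

variable (a b c d : Fin 4 → ℂ)

@[simp] lemma det4_repeat_fst : det4 a b c a = 0 := by
  rw [det4_expand]; ring

@[simp] lemma det4_repeat_snd : det4 a b c b = 0 := by
  rw [det4_expand]; ring

@[simp] lemma det4_repeat_thd : det4 a b c c = 0 := by
  rw [det4_expand]; ring

lemma det4_swap_fst_snd : det4 b a c d = -det4 a b c d := by
  simp only [det4_expand]; ring

lemma det4_swap_thd_lst : det4 a b d c = -det4 a b c d := by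
  simp only [det4_expand]; ring

lemma det4_rotate : det4 b c d a = -det4 a b c d := by
  simp only [det4_expand]; ring

end Alternating

lemma det4_cramer (a b c d e : Fin 4 → ℂ) :
    det4 b c d e • a - det4 a c d e • b + det4 a b d e • c - det4 a b c e • d
      + det4 a b c d • e = 0 := by
  ext i
  fin_cases i <;>
    simp only [det4_expand, Fin.isValue, Fin.zero_eta, Fin.mk_one, Fin.reduceFinMk, Pi.add_apply,
      Pi.sub_apply, Pi.smul_apply, smul_eq_mul, Pi.zero_apply] <;>
    ring

@[simps]
def det4Dual (p q r : Fin 4 → ℂ) : Module.Dual ℂ (Fin 4 → ℂ) where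
  toFun := det4 p q r
  map_add' x y := by simp only [det4_expand, Pi.add_apply]; ring
  map_smul' s x := by simp only [det4_expand, Pi.smul_apply, smul_eq_mul, RingHom.id_apply]; ring

lemma det4_plucker (p q r a b c d e : Fin 4 → ℂ) :
    det4 b c d e * det4 p q r a - det4 a c d e * det4 p q r b + det4 a b d e * det4 p q r c
      - det4 a b c e * det4 p q r d + det4 a b c d * det4 p q r e = 0 := by
  have h := congrArg (det4Dual p q r) (det4_cramer a b c d e)
  simp only [map_add, map_sub, map_smul, map_zero, smul_eq_mul] at h
  simpa only [det4Dual_apply] using h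

section Ych

variable (z1 z2 z5 z6 z7 z8 z9 : Fin 4 → ℂ)

lemma Ych_plucker (a b c d e : Fin 4 → ℂ) :
    det4 b c d e * Ych z1 z2 z5 z6 z7 z8 z9 a - det4 a c d e * Ych z1 z2 z5 z6 z7 z8 z9 b
      + det4 a b d e * Ych z1 z2 z5 z6 z7 z8 z9 c - det4 a b c e * Ych z1 z2 z5 z6 z7 z8 z9 d
      + det4 a b c d * Ych z1 z2 z5 z6 z7 z8 z9 e = 0 := by
  simp only [Ych, chain323]
  linear_combination det4 z7 z8 z9 z1 * det4_plucker z2 z5 z6 a b c d e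
    - det4 z7 z8 z9 z2 * det4_plucker z1 z5 z6 a b c d e

@[simp] lemma Ych_fifth : Ych z1 z2 z5 z6 z7 z8 z9 z5 = 0 := by
  simp [Ych, chain323]

@[simp] lemma Ych_sixth : Ych z1 z2 z5 z6 z7 z8 z9 z6 = 0 := by
  simp [Ych, chain323]

lemma Ych_fst : Ych z1 z2 z5 z6 z7 z8 z9 z1 = -(det4 z7 z8 z9 z1 * det4 z1 z2 z5 z6) := by
  simp [Ych, chain323, det4_rotate z1 z2 z5 z6]

lemma Ych_snd : Ych z1 z2 z5 z6 z7 z8 z9 z2 = -(det4 z7 z8 z9 z2 * det4 z1 z2 z5 z6) := by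
  simp [Ych, chain323, det4_rotate z2 z1 z5 z6, det4_swap_fst_snd z1 z2]

lemma Ych_sub_chain323 (w : Fin 4 → ℂ) :
    Ych z1 z2 z5 z6 z7 z8 z9 w - chain323 z1 z2 w z6 z5 z7 z8 z9
      = -(det4 z1 z2 z5 z6 * det4 z7 z8 z9 w) := by
  simp only [Ych, chain323]
  linear_combination det4_plucker z7 z8 z9 z1 z2 z5 z6 w
    + det4 z7 z8 z9 z6 * det4_swap_thd_lst z1 z2 z5 w
    - det4 z1 z2 w z5 * det4_rotate z6 z7 z8 z9
    - det4 z7 z8 z9 z5 * det4_swap_thd_lst z1 z2 z6 w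
    + det4 z1 z2 w z6 * det4_rotate z5 z7 z8 z9

end Ych

theorem identities_for_Y_general (z1 z2 z5 z6 z7 z8 z9 w : Fin 4 → ℂ) :
    (det4 z1 z2 z7 w * Ych z1 z2 z5 z6 z7 z8 z9 z8
        - det4 z1 z2 z8 w * Ych z1 z2 z5 z6 z7 z8 z9 z7
      = det4 z1 z2 z7 z8 * chain323 z1 z2 w z6 z5 z7 z8 z9) ∧
    (det4 z5 z6 z7 w * Ych z1 z2 z5 z6 z7 z8 z9 z8
        - det4 z5 z6 z8 w * Ych z1 z2 z5 z6 z7 z8 z9 z7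
      = det4 z5 z6 z7 z8 * Ych z1 z2 z5 z6 z7 z8 z9 w) := by
  constructor
  · have hY := Ych_plucker z1 z2 z5 z6 z7 z8 z9 z1 z2 z7 z8 w
    have h789 := det4_plucker z7 z8 z9 z1 z2 z7 z8 w
    simp only [det4_repeat_fst, det4_repeat_snd, mul_zero, sub_zero, add_zero] at h789
    rw [Ych_fst, Ych_snd] at hY
    linear_combination -hY - det4 z1 z2 z5 z6 * h789
      + det4 z1 z2 z7 z8 * Ych_sub_chain323 z1 z2 z5 z6 z7 z8 z9 w
  · have hY := Ych_plucker z1 z2 z5 z6 z7 z8 z9 z5 z6 z7 z8 w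
    simp only [Ych_fifth, Ych_sixth, mul_zero, sub_zero, zero_add] at hY
    linear_combination -hY

/-- For all vectors `z₁, …, z₉, w ∈ ℂ⁴`, with
`Y_x := ⟨789 * 21 * 56x⟩`:
(i) `⟨127w⟩·Y₈ − ⟨128w⟩·Y₇ = ⟨1278⟩·⟨12w * 65 * 789⟩`;
(ii) `⟨567w⟩·Y₈ − ⟨568w⟩·Y₇ = ⟨5678⟩·Y_w`. -/
theorem identities_for_Y (z1 z2 z3 z4 z5 z6 z7 z8 z9 w : Fin 4 → ℂ) :
    (det4 z1 z2 z7 w * Ych z1 z2 z5 z6 z7 z8 z9 z8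
        - det4 z1 z2 z8 w * Ych z1 z2 z5 z6 z7 z8 z9 z7
      = det4 z1 z2 z7 z8 * chain323 z1 z2 w z6 z5 z7 z8 z9) ∧
    (det4 z5 z6 z7 w * Ych z1 z2 z5 z6 z7 z8 z9 z8
        - det4 z5 z6 z8 w * Ych z1 z2 z5 z6 z7 z8 z9 z7
      = det4 z5 z6 z7 z8 * Ych z1 z2 z5 z6 z7 z8 z9 w) :=
  identities_for_Y_general z1 z2 z5 z6 z7 z8 z9 w
end
end

section
/- For all vectors z_1,…,z_9 ∈ ℂ^4 the following polynomial identity holds: A·Y_7² − B·Y_7·Y_8 + C·Y_8² = −⟨1278⟩·⟨5678⟩·⟨((789*12), z_5, z_6) * (z_3, z_4) * (z_1, z_2, (56*789))⟩, where Y_i := ⟨789*21*56i⟩ is the chain polynomial with blocks (z_7,z_8,z_9), (z_2,z_1), (z_5,z_6,z_i); the right-hand factor is the chain polynomial whose three blocks are the triple ((789*12), z_5, z_6), the pair (z_3,z_4), and the triple (z_1, z_2, (56*789)); and (789*12) and (56*789) are the shuffle vectors associated with the tuples ((z_7,z_8,z_9),(z_1,z_2)) and ((z_5,z_6),(z_7,z_8,z_9))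 respectively. -/
noncomputable section

/-! Write `Φ(u, v) := ⟨12u * 43 * 56v⟩`, bilinear in `u` and `v`. The left-hand side is
`Φ(W, W)` for `W := Y₇ z₈ − Y₈ z₇`. The five-term relation among `z₁ (or z₂), z₅, …, z₈`, together
with a Plücker relation, gives `W = ⟨5678⟩ P − ⟨1278⟩ Q`, where `P = (789*12)` and `Q = (56*789)`
are the points where the plane `789` meets the lines `12` and `56`. Since `P` lies on `12` and
`Q` on `56`, `Φ(P, ·) = Φ(·, Q) = 0`, so `Φ(W, W) = −⟨5678⟩⟨1278⟩ Φ(Q, P)`, and `Φ(Q, P)` is the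
chain on the right-hand side read backwards. -/

lemma det4_eq_leibniz (a b c d : Fin 4 → ℂ) :
    det4 a b c d =
      a 0 * b 1 * c 2 * d 3 - a 0 * b 1 * c 3 * d 2 - a 0 * b 2 * c 1 * d 3
      + a 0 * b 2 * c 3 * d 1 + a 0 * b 3 * c 1 * d 2 - a 0 * b 3 * c 2 * d 1
      - a 1 * b 0 * c 2 * d 3 + a 1 * b 0 * c 3 * d 2 + a 1 * b 2 * c 0 * d 3
      - a 1 * b 2 * c 3 * d 0 - a 1 * b 3 * c 0 * d 2 + a 1 * b 3 * c 2 * d 0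
      + a 2 * b 0 * c 1 * d 3 - a 2 * b 0 * c 3 * d 1 - a 2 * b 1 * c 0 * d 3
      + a 2 * b 1 * c 3 * d 0 + a 2 * b 3 * c 0 * d 1 - a 2 * b 3 * c 1 * d 0
      - a 3 * b 0 * c 1 * d 2 + a 3 * b 0 * c 2 * d 1 + a 3 * b 1 * c 0 * d 2
      - a 3 * b 1 * c 2 * d 0 - a 3 * b 2 * c 0 * d 1 + a 3 * b 2 * c 1 * d 0 := by
  rw [det4, Matrix.det_succ_row_zero]
  simp [Fin.sum_univ_succ, Matrix.det_fin_three, Matrix.submatrix_apply, Fin.succAbove]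
  ring

lemma det4_smul_sub_smul_col3 (x y u v w : Fin 4 → ℂ) (a b : ℂ) :
    det4 x y (a • u - b • v) w = a * det4 x y u w - b * det4 x y v w := by
  simp only [det4_eq_leibniz, Pi.sub_apply, Pi.smul_apply, smul_eq_mul]; ring

lemma det4_smul_sub_smul_col4 (x y w u v : Fin 4 → ℂ) (a b : ℂ) :
    det4 x y w (a • u - b • v) = a * det4 x y w u - b * det4 x y w v := by
  simp only [det4_eq_leibniz, Pi.sub_apply, Pi.smul_apply, smul_eq_mul]; ring

lemma det4_shuf32_col3_eq_zero (x1 x2 x3 y1 y2 w : Fin 4 → ℂ) :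
    det4 y1 y2 (shuf32 x1 x2 x3 y1 y2) w = 0 := by
  simp only [shuf32, det4_eq_leibniz, Pi.sub_apply, Pi.smul_apply, smul_eq_mul]; ring

lemma det4_shuf23_col4_eq_zero (x x1 x2 y1 y2 y3 : Fin 4 → ℂ) :
    det4 x x1 x2 (shuf23 x1 x2 y1 y2 y3) = 0 := by
  simp only [shuf23, det4_eq_leibniz, Pi.add_apply, Pi.sub_apply, Pi.smul_apply, smul_eq_mul]
  ring

lemma alternating_sum_det4_smul_eq_zero (v0 v1 v2 v3 v4 : Fin 4 → ℂ) :
    det4 v1 v2 v3 v4 • v0 - det4 v0 v2 v3 v4 • v1 + det4 v0 v1 v3 v4 • v2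
      - det4 v0 v1 v2 v4 • v3 + det4 v0 v1 v2 v3 • v4 = 0 := by
  funext i
  fin_cases i <;>
    simp [det4_eq_leibniz] <;> ring

lemma det4_pluecker (u a b c p q : Fin 4 → ℂ) :
    det4 a b c p * det4 q u a b - det4 a b c q * det4 p u a b - det4 p q a b * det4 u a b c
      = 0 := by
  simp only [det4_eq_leibniz]; ring

lemma Ych_smul_sub_Ych_smul (z1 z2 z5 z6 z7 z8 z9 : Fin 4 → ℂ) :
    Ych z1 z2 z5 z6 z7 z8 z9 z7 • z8 - Ych z1 z2 z5 z6 z7 z8 z9 z8 • z7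
      = det4 z5 z6 z7 z8 • shuf32 z7 z8 z9 z1 z2
        - det4 z1 z2 z7 z8 • shuf23 z5 z6 z7 z8 z9 := by
  have r1 := alternating_sum_det4_smul_eq_zero z1 z5 z6 z7 z8
  have r2 := alternating_sum_det4_smul_eq_zero z2 z5 z6 z7 z8
  have r9 := alternating_sum_det4_smul_eq_zero z5 z6 z7 z8 z9
  have p5 := det4_pluecker z5 z7 z8 z9 z1 z2
  have p6 := det4_pluecker z6 z7 z8 z9 z1 z2
  simp only [Ych, chain323, shuf32, shuf23]
  linear_combination (norm := module) det4 z7 z8 z9 z1 • r2 - det4 z7 z8 z9 z2 • r1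
    + det4 z1 z2 z7 z8 • r9 + p6 • z5 - p5 • z6

lemma chain323_smul_sub_smul (x1 x2 y1 y2 u1 u2 u v : Fin 4 → ℂ) (a b : ℂ) :
    chain323 x1 x2 (a • u - b • v) y1 y2 u1 u2 (a • u - b • v)
      = a ^ 2 * chain323 x1 x2 u y1 y2 u1 u2 u
        - a * b * (chain323 x1 x2 u y1 y2 u1 u2 v + chain323 x1 x2 v y1 y2 u1 u2 u)
        + b ^ 2 * chain323 x1 x2 v y1 y2 u1 u2 v := by
  simp only [chain323, det4_smul_sub_smul_col3, det4_smul_sub_smul_col4]; ring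

lemma chain323_eq_zero_of_det4_left {x1 x2 x3 y1 y2 u1 u2 u3 : Fin 4 → ℂ}
    (h : ∀ y, det4 x1 x2 x3 y = 0) :
    chain323 x1 x2 x3 y1 y2 u1 u2 u3 = 0 := by
  simp [chain323, h]

lemma chain323_eq_zero_of_det4_right {x1 x2 x3 y1 y2 u1 u2 u3 : Fin 4 → ℂ}
    (h : ∀ y, det4 y u1 u2 u3 = 0) :
    chain323 x1 x2 x3 y1 y2 u1 u2 u3 = 0 := by
  simp [chain323, h]

lemma chain323_reverse (x1 x2 x3 y1 y2 u1 u2 u3 : Fin 4 → ℂ) :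
    chain323 x1 x2 x3 y1 y2 u1 u2 u3 = chain323 u3 u1 u2 y2 y1 x1 x2 x3 := by
  simp only [chain323, det4_eq_leibniz]; ring

/-- For all vectors `z₁, …, z₉ ∈ ℂ⁴`:
`A·Y₇² − B·Y₇·Y₈ + C·Y₈²
  = −⟨1278⟩·⟨5678⟩·⟨((789*12), z₅, z₆) * (z₃, z₄) * (z₁, z₂, (56*789))⟩`,
where the right-hand factor is the chain polynomial whose three blocks are the triple
`((789*12), z₅, z₆)`, the pair `(z₃, z₄)`, and the triple `(z₁, z₂, (56*789))`, and
`(789*12)` and `(56*789)` are the indicated shuffle vectors. -/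
theorem identity_quadratic_in_Y7_Y8 (z1 z2 z3 z4 z5 z6 z7 z8 z9 : Fin 4 → ℂ) :
    Aco z1 z2 z3 z4 z5 z6 z7 z8 * Ych z1 z2 z5 z6 z7 z8 z9 z7 ^ 2
      - Bco z1 z2 z3 z4 z5 z6 z7 z8 * Ych z1 z2 z5 z6 z7 z8 z9 z7 *
          Ych z1 z2 z5 z6 z7 z8 z9 z8
      + Cco z1 z2 z3 z4 z5 z6 z7 z8 * Ych z1 z2 z5 z6 z7 z8 z9 z8 ^ 2
    = -(det4 z1 z2 z7 z8 * det4 z5 z6 z7 z8 *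
        chain323 (shuf32 z7 z8 z9 z1 z2) z5 z6 z3 z4 z1 z2 (shuf23 z5 z6 z7 z8 z9)) := by
  have hW := Ych_smul_sub_Ych_smul z1 z2 z5 z6 z7 z8 z9
  set P := shuf32 z7 z8 z9 z1 z2
  set Q := shuf23 z5 z6 z7 z8 z9
  have hP : ∀ v, chain323 z1 z2 P z4 z3 z5 z6 v = 0 := fun _ =>
    chain323_eq_zero_of_det4_left (det4_shuf32_col3_eq_zero z7 z8 z9 z1 z2)
  have hQ : ∀ u, chain323 z1 z2 u z4 z3 z5 z6 Q = 0 := fun _ =>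
    chain323_eq_zero_of_det4_right fun y => det4_shuf23_col4_eq_zero y z5 z6 z7 z8 z9
  calc _ = chain323 z1 z2 (Ych z1 z2 z5 z6 z7 z8 z9 z7 • z8 - Ych z1 z2 z5 z6 z7 z8 z9 z8 • z7)
          z4 z3 z5 z6 (Ych z1 z2 z5 z6 z7 z8 z9 z7 • z8 - Ych z1 z2 z5 z6 z7 z8 z9 z8 • z7) := by
        rw [chain323_smul_sub_smul, Aco, Bco, Cco]; ring
    _ = -(det4 z1 z2 z7 z8 * det4 z5 z6 z7 z8 * chain323 z1 z2 Q z4 z3 z5 z6 P) := by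
        rw [hW, chain323_smul_sub_smul, hP, hP, hQ]; ring
    _ = _ := by rw [chain323_reverse]

end
end
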